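/- Let p : V \ {r} → V be a parent function on a finite vertex set whose functional graph is a spanning tree rooted at r, and let level : V → ℕ satisfy level(r) = 0 and level(p(v)) + 1 ≤ level(v). If v changes its parent to a neighbor u with level(u) + 1 ≤ level(v), then u is not a descendant of v, and hence the new parent function still defines a spanning tree rooted at r. -/

import Mathlib

/-! A level function strictly decreases along parent edges, so the level of every ancestor of `u` is
at most `level u < level v`, and `v` is not among them. After the change the level still strictly
decreases along every parent edge off the root, so following parents from any vertex must reach the
root: the level cannot decrease forever. -/

section LevelDescent

variable {α : Type*} (f : α → α) (φ : α → ℕ)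

theorem iterate_le_of_map_le (hφ : ∀ x, φ (f x) ≤ φ x) (k : ℕ) (x : α) :
    φ (f^[k] x) ≤ φ x :=
  antitone_nat_of_succ_le (f := fun n => φ (f^[n] x))
    (fun n => by simpa only [Function.iterate_succ_apply'] using hφ _) (Nat.zero_le k)

theorem iterate_ne_of_map_le (hφ : ∀ x, φ (f x) ≤ φ x) {u v : α} (huv : φ u < φ v) (k : ℕ) :
    f^[k] u ≠ v := fun h =>
  (iterate_le_of_map_le f φ hφ k u).not_gt (h ▸ huv)

theorem exists_iterate_eq_of_map_lt (r : α) (hφ : ∀ x, x ≠ r → φ (f x) < φ x) (x : α) :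
    ∃ k, f^[k] x = r := by
  by_cases hx : x = r
  · exact ⟨0, hx⟩
  · obtain ⟨k, hk⟩ := exists_iterate_eq_of_map_lt r hφ (f x)
    exact ⟨k + 1, hk⟩
termination_by φ x
decreasing_by exact hφ x hx

end LevelDescent

theorem safe_parent_change_general {V : Type*} [DecidableEq V]
    (r : V) (p : V → V) (level : V → ℕ)
    (hpr : p r = r)
    (hlev : ∀ x, x ≠ r → level (p x) + 1 ≤ level x)
    (v u : V)
    (hle : level u + 1 ≤ level v) :
    (¬ ∃ k : ℕ, p^[k] u = v) ∧
    ∀ x, ∃ k : ℕ, (Function.update p v u)^[k] x = r := by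
  have hmono : ∀ x, level (p x) ≤ level x := fun x => by
    rcases eq_or_ne x r with rfl | hx
    · rw [hpr]
    · exact Nat.le_of_succ_le (hlev x hx)
  refine ⟨fun ⟨k, hk⟩ => iterate_ne_of_map_le p level hmono hle k hk, ?_⟩
  refine exists_iterate_eq_of_map_lt _ level r fun x hx => ?_
  rcases eq_or_ne x v with rfl | hxv
  · rw [Function.update_self]
    exact hle
  · rw [Function.update_of_ne hxv]
    exact hlev x hx

/-- If the parent function `p` forms a spanning tree rooted at `r`, with a
level function satisfying `level r = 0` and `level (p v) + 1 ≤ level v` for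
`v ≠ r`, and a vertex `v ≠ r` changes its parent to a neighbor `u` with
`level u + 1 ≤ level v`, then `u` is not a descendant of `v`, and hence the
new parent function still defines a spanning tree rooted at `r`. -/
theorem safe_parent_change {V : Type*} [Fintype V] [DecidableEq V]
    (G : SimpleGraph V) (r : V) (p : V → V) (level : V → ℕ)
    (hpr : p r = r) (hr0 : level r = 0)
    (hlev : ∀ x, x ≠ r → level (p x) + 1 ≤ level x)
    (htree : ∀ x, ∃ k : ℕ, p^[k] x = r)
    (v u : V) (hvr : v ≠ r) (hadj : G.Adj v u)
    (hle : level u + 1 ≤ level v) :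
    (¬ ∃ k : ℕ, p^[k] u = v) ∧
    ∀ x, ∃ k : ℕ, (Function.update p v u)^[k] x = r :=
  safe_parent_change_general r p level hpr hlev v u hle
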